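/- Define f₊(x) = μ(1−x)·ϑ₁(x+n₁)/(ϑ₁(x+n₁)+(1−x+n₂)) and f₋(x) = μx·ϑ₂(1−x+n₂)/((x+n₁)+ϑ₂(1−x+n₂)). With the scaling n_i = h·N_i and ϑ_i = 1 − h·θ_i, the limit lim_{h→0⁺} (f₊(x) − f₋(x))/h = μ·( ((θ₁+θ₂)x − θ₁)·x·(1−x) − (N₁+N₂)x + N₁ ) holds for every fixed x ∈ (0,1), μ > 0, N₁, N₂ > 0 and θ₁, θ₂ ≥ 0. -/

import Mathlib

theorem stmt13 (μ N₁ N₂ θ₁ θ₂ x : ℝ) (hμ : 0 < μ) (hN₁ : 0 < N₁) (hN₂ : 0 < N₂)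
    (hθ₁ : 0 ≤ θ₁) (hθ₂ : 0 ≤ θ₂) (hx : x ∈ Set.Ioo (0 : ℝ) 1) :
    Filter.Tendsto
      (fun h : ℝ =>
        (μ * (1 - x) * ((1 - h * θ₁) * (x + h * N₁)) /
            ((1 - h * θ₁) * (x + h * N₁) + (1 - x + h * N₂)) -
          μ * x * ((1 - h * θ₂) * (1 - x + h * N₂)) /
            ((x + h * N₁) + (1 - h * θ₂) * (1 - x + h * N₂))) / h)
      (nhdsWithin 0 (Set.Ioi 0))
      (nhds (μ * (((θ₁ + θ₂) * x - θ₁) * x * (1 - x) - (N₁ + N₂) * x + N₁))) := by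
  obtain ⟨hx0, hx1⟩ := hx
  set φ : ℝ → ℝ := fun h =>
      μ * (1 - x) * ((1 - h * θ₁) * (x + h * N₁)) /
          ((1 - h * θ₁) * (x + h * N₁) + (1 - x + h * N₂)) -
        μ * x * ((1 - h * θ₂) * (1 - x + h * N₂)) /
          ((x + h * N₁) + (1 - h * θ₂) * (1 - x + h * N₂)) with hφ
  set L := μ * (((θ₁ + θ₂) * x - θ₁) * x * (1 - x) - (N₁ + N₂) * x + N₁) with hLdef
  -- building blocks
  have h1 : HasDerivAt (fun h : ℝ => 1 - h * θ₁) (-θ₁) 0 := by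
    simpa using ((hasDerivAt_id (0:ℝ)).mul_const θ₁).const_sub 1
  have h2 : HasDerivAt (fun h : ℝ => x + h * N₁) N₁ 0 := by
    simpa using ((hasDerivAt_id (0:ℝ)).mul_const N₁).const_add x
  have h3 : HasDerivAt (fun h : ℝ => 1 - h * θ₂) (-θ₂) 0 := by
    simpa using ((hasDerivAt_id (0:ℝ)).mul_const θ₂).const_sub 1
  have h4 : HasDerivAt (fun h : ℝ => 1 - x + h * N₂) N₂ 0 := by
    simpa using ((hasDerivAt_id (0:ℝ)).mul_const N₂).const_add (1 - x)
  have hA : HasDerivAt (fun h : ℝ => (1 - h * θ₁) * (x + h * N₁))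
      ((-θ₁) * (x + 0 * N₁) + (1 - 0 * θ₁) * N₁) 0 := h1.mul h2
  have hC : HasDerivAt (fun h : ℝ => (1 - h * θ₂) * (1 - x + h * N₂))
      ((-θ₂) * (1 - x + 0 * N₂) + (1 - 0 * θ₂) * N₂) 0 := h3.mul h4
  have hnum1 : HasDerivAt (fun h : ℝ => μ * (1 - x) * ((1 - h * θ₁) * (x + h * N₁)))
      (μ * (1 - x) * ((-θ₁) * (x + 0 * N₁) + (1 - 0 * θ₁) * N₁)) 0 := hA.const_mul _
  have hden1 : HasDerivAt (fun h : ℝ => (1 - h * θ₁) * (x + h * N₁) + (1 - x + h * N₂))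
      (((-θ₁) * (x + 0 * N₁) + (1 - 0 * θ₁) * N₁) + N₂) 0 := hA.add h4
  have hnum2 : HasDerivAt (fun h : ℝ => μ * x * ((1 - h * θ₂) * (1 - x + h * N₂)))
      (μ * x * ((-θ₂) * (1 - x + 0 * N₂) + (1 - 0 * θ₂) * N₂)) 0 := hC.const_mul _
  have hden2 : HasDerivAt (fun h : ℝ => (x + h * N₁) + (1 - h * θ₂) * (1 - x + h * N₂))
      (N₁ + ((-θ₂) * (1 - x + 0 * N₂) + (1 - 0 * θ₂) * N₂)) 0 := h2.add hC
  have hd1ne : (1 - 0 * θ₁) * (x + 0 * N₁) + (1 - x + 0 * N₂) ≠ 0 := by norm_num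
  have hd2ne : (x + 0 * N₁) + (1 - 0 * θ₂) * (1 - x + 0 * N₂) ≠ 0 := by norm_num
  have hf1 := hnum1.div hden1 hd1ne
  have hf2 := hnum2.div hden2 hd2ne
  have hf : HasDerivAt φ L 0 := by
    have := hf1.sub hf2
    convert this using 1
    · exact rfl
    · exact rfl
    · exact rfl
    have hx0' : ((1 - 0 * θ₁) * (x + 0 * N₁) + (1 - x + 0 * N₂)) = 1 := by norm_num
    have hx1' : ((x + 0 * N₁) + (1 - 0 * θ₂) * (1 - x + 0 * N₂)) = 1 := by norm_num
    rw [hLdef]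
    field_simp
    ring
  have hφ0 : φ 0 = 0 := by
    rw [hφ]
    norm_num
    ring
  have key : Filter.Tendsto (fun h => φ h / h) (nhdsWithin (0:ℝ) {(0:ℝ)}ᶜ) (nhds L) := by
    have hs := hasDerivAt_iff_tendsto_slope.mp hf
    have : (fun h => φ h / h) = slope φ 0 := by
      funext h
      simp [slope_def_field, hφ0]
    rw [this]
    exact hs
  exact key.mono_left (nhdsWithin_mono _ fun y hy => ne_of_gt hy)
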